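/- There exists a constant C, independent of ε and N, such that ‖∇(u − u^I)‖_{L^1(Ω_s)} ≤ C N^{-1}, where the gradient of the piecewise bilinear interpolant is taken rectangle-by-rectangle. -/

import Mathlib

open MeasureTheory Real Set

noncomputable section

/-- First-order partial derivative in the x-direction. -/
def pdx (f : ℝ × ℝ → ℝ) : ℝ × ℝ → ℝ := fun p => fderiv ℝ f p (1, 0)

/-- First-order partial derivative in the y-direction. -/
def pdy (f : ℝ × ℝ → ℝ) : ℝ × ℝ → ℝ := fun p => fderiv ℝ f p (0, 1)

/-- Mixed partial derivative `∂_x^i ∂_y^j`. -/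
def pd (i j : ℕ) (f : ℝ × ℝ → ℝ) : ℝ × ℝ → ℝ := pdx^[i] (pdy^[j] f)

/-- A function coincides with a bilinear polynomial `a + bx + cy + dxy` on a set. -/
def IsBilinearOn (f : ℝ × ℝ → ℝ) (s : Set (ℝ × ℝ)) : Prop :=
  ∃ a b c d : ℝ, ∀ p ∈ s, f p = a + b * p.1 + c * p.2 + d * (p.1 * p.2)

/-- The Shishkin-mesh node abscissas. -/
def meshX (N : ℕ) (lx : ℝ) (i : ℕ) : ℝ :=
  if i ≤ N / 2 then 2 * (i : ℝ) * (1 - lx) / (N : ℝ)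
  else 1 - 2 * ((N : ℝ) - (i : ℝ)) * lx / (N : ℝ)

/-- The Shishkin-mesh node ordinates. -/
def meshY (N : ℕ) (ly : ℝ) (j : ℕ) : ℝ :=
  if j ≤ N / 3 then 3 * (j : ℝ) * ly / (N : ℝ)
  else if j ≤ 2 * N / 3 then
    (3 * (j : ℝ) / (N : ℝ) - 1) - 3 * (2 * (j : ℝ) - (N : ℝ)) * ly / (N : ℝ)
  else 1 - 3 * ((N : ℝ) - (j : ℝ)) * ly / (N : ℝ)

/-- The mesh rectangle `τ_{ij} = [x_{i-1}, x_i] × [y_{j-1}, y_j]`. -/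
def meshRect (N : ℕ) (lx ly : ℝ) (i j : ℕ) : Set (ℝ × ℝ) :=
  Icc (meshX N lx (i - 1)) (meshX N lx i) ×ˢ Icc (meshY N ly (j - 1)) (meshY N ly j)

def OmegaS (lx ly : ℝ) : Set (ℝ × ℝ) := Icc 0 (1 - lx) ×ˢ Icc ly (1 - ly)
def Omega1R (lx ly : ℝ) : Set (ℝ × ℝ) := Icc (1 - lx) 1 ×ˢ Icc ly (1 - ly)
def Omega2R (lx ly : ℝ) : Set (ℝ × ℝ) := Icc 0 (1 - lx) ×ˢ (Icc 0 ly ∪ Icc (1 - ly) 1)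
def Omega12R (lx ly : ℝ) : Set (ℝ × ℝ) := Icc (1 - lx) 1 ×ˢ (Icc 0 ly ∪ Icc (1 - ly) 1)

/-- Basic assumptions on the Shishkin mesh data (with `ρ = 2.5`). -/
def ShishkinHyp (N : ℕ) (ε β lx ly : ℝ) : Prop :=
  0 < N ∧ 6 ∣ N ∧ 0 < ε ∧ ε ≤ (N : ℝ)⁻¹ ∧ 0 < β ∧
  lx = 2.5 * ε / β * Real.log (N : ℝ) ∧ ly = 2.5 * Real.sqrt ε * Real.log (N : ℝ) ∧
  lx ≤ 1 / 2 ∧ ly ≤ 1 / 4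

/-- `gI` is the piecewise-bilinear nodal interpolant of `g` on the Shishkin mesh. -/
def IsMeshInterpolant (N : ℕ) (lx ly : ℝ) (g gI : ℝ × ℝ → ℝ) : Prop :=
  Continuous gI ∧
  (∀ i j : ℕ, 1 ≤ i → i ≤ N → 1 ≤ j → j ≤ N → IsBilinearOn gI (meshRect N lx ly i j)) ∧
  (∀ i j : ℕ, i ≤ N → j ≤ N →
    gI (meshX N lx i, meshY N ly j) = g (meshX N lx i, meshY N ly j))

def UnitSq : Set (ℝ × ℝ) := Icc 0 1 ×ˢ Icc 0 1

/-- Bounds on the regular part `S` of the solution decomposition. -/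
def BoundS (C0 : ℝ) (S : ℝ × ℝ → ℝ) : Prop :=
  ContDiff ℝ 3 S ∧ ∀ i j : ℕ, i + j ≤ 3 → ∀ p ∈ UnitSq, |pd i j S p| ≤ C0

/-- Bounds on the exponential-layer part `E₁`. -/
def BoundE1 (ε β C0 : ℝ) (E1 : ℝ × ℝ → ℝ) : Prop :=
  ContDiff ℝ 3 E1 ∧ ∀ i j : ℕ, i + j ≤ 3 → ∀ p ∈ UnitSq,
    |pd i j E1 p| ≤ C0 * ε ^ (-(i : ℝ)) * Real.exp (-β * (1 - p.1) / ε)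

/-- Bounds on the characteristic-layer part `E₂`. -/
def BoundE2 (ε C0 : ℝ) (E2 : ℝ × ℝ → ℝ) : Prop :=
  ContDiff ℝ 3 E2 ∧ ∀ i j : ℕ, i + j ≤ 3 → ∀ p ∈ UnitSq,
    |pd i j E2 p| ≤ C0 * ε ^ (-(j : ℝ) / 2) *
      (Real.exp (-p.2 / Real.sqrt ε) + Real.exp (-(1 - p.2) / Real.sqrt ε))

/-- Bounds on the corner-layer part `E₁₂`. -/
def BoundE12 (ε β C0 : ℝ) (E12 : ℝ × ℝ → ℝ) : Prop :=
  ContDiff ℝ 3 E12 ∧ ∀ i j : ℕ, i + j ≤ 3 → ∀ p ∈ UnitSq,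
    |pd i j E12 p| ≤ C0 * ε ^ (-((i : ℝ) + (j : ℝ) / 2)) * Real.exp (-β * (1 - p.1) / ε) *
      (Real.exp (-p.2 / Real.sqrt ε) + Real.exp (-(1 - p.2) / Real.sqrt ε))

/-- Membership in the bilinear finite element space `V^N`. -/
def MemVN (N : ℕ) (lx ly : ℝ) (v : ℝ × ℝ → ℝ) : Prop :=
  Continuous v ∧
  (∀ p ∈ UnitSq, (p.1 = 0 ∨ p.1 = 1 ∨ p.2 = 0 ∨ p.2 = 1) → v p = 0) ∧
  ∀ i j : ℕ, 1 ≤ i → i ≤ N → 1 ≤ j → j ≤ N → IsBilinearOn v (meshRect N lx ly i j)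

/-- The SDFEM stabilization parameter `δ`. -/
def sdDelta (N : ℕ) (lx ly Cstar : ℝ) : ℝ × ℝ → ℝ :=
  (OmegaS lx ly ∪ Omega2R lx ly).indicator fun _ => Cstar / (N : ℝ)

/-- The SDFEM bilinear form `B`. -/
def Bform (N : ℕ) (lx ly ε b c Cstar : ℝ) (v w : ℝ × ℝ → ℝ) : ℝ :=
  ∫ p in UnitSq,
    (ε * (pdx v p * pdx w p + pdy v p * pdy w p)
      + (b * pdx v p + c * v p) * w p
      + (b * pdx v p + c * v p) * (sdDelta N lx ly Cstar p * (b * pdx w p)))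

/-- The square of the SDFEM energy norm `|||·|||`. -/
def energySq (N : ℕ) (lx ly ε b c Cstar : ℝ) (v : ℝ × ℝ → ℝ) : ℝ :=
  ∫ p in UnitSq,
    ((ε + b ^ 2 * sdDelta N lx ly Cstar p) * pdx v p ^ 2
      + ε * pdy v p ^ 2 + c * v p ^ 2)

/-- The neighbourhood `Ω₀` of the point `(xs, ys)`. -/
def OmegaZero (N : ℕ) (xs ys K sx sy : ℝ) : Set (ℝ × ℝ) :=
  {p : ℝ × ℝ | p ∈ Ioo (0 : ℝ) 1 ×ˢ Ioo (0 : ℝ) 1 ∧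
    p.1 - xs ≤ K * sx * Real.log (N : ℝ) ∧ |p.2 - ys| ≤ K * sy * Real.log (N : ℝ)}

/-- `Ω₀'`: the smallest union of mesh rectangles containing `Ω₀`. -/
def OmegaZero' (N : ℕ) (lx ly xs ys K sx sy : ℝ) : Set (ℝ × ℝ) :=
  ⋃ i ∈ Finset.Icc 1 N, ⋃ j ∈ Finset.Icc 1 N,
    ⋃ (_ : volume (OmegaZero N xs ys K sx sy ∩ meshRect N lx ly i j) ≠ 0),
      meshRect N lx ly i j

/-!
On `Ω_s` the Shishkin mesh is uniform, with cell widths between `N⁻¹` and `3N⁻¹`. On a cell,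
`∂ₓuᴵ` lies between the difference quotients of `u` along the bottom and top edges, so it suffices
to compare `∂ₓu(p)` with such a quotient (and likewise for `∂_y`). For the smooth part `S` the
mean value theorem and the bounds on the second derivatives give `O(N⁻¹)`. For a layer part the
quotient is the integral of the derivative along the edge divided by the width `≥ N⁻¹`, and the
choice `ρ = 5/2` makes the layer functions `≤ N^{-5/2}` on `Ω_s`; what is left is the pointwise
size of the layer derivatives, `ε⁻¹ e^{-β(1-x)/ε}` and `ε^{-1/2} (e^{-y/√ε} + e^{-(1-y)/√ε})`,
whose integrals over `Ω_s` are again `O(N^{-5/2})`. The grid lines are a null set, so the pointwise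
bound holds almost everywhere on `Ω_s`.
-/

lemma ContDiff.pdx {f : ℝ × ℝ → ℝ} {n : ℕ} (hf : ContDiff ℝ (n + 1) f) :
    ContDiff ℝ n (pdx f) :=
  (hf.fderiv_right le_rfl).clm_apply contDiff_const

lemma ContDiff.pdy {f : ℝ × ℝ → ℝ} {n : ℕ} (hf : ContDiff ℝ (n + 1) f) :
    ContDiff ℝ n (pdy f) :=
  (hf.fderiv_right le_rfl).clm_apply contDiff_const

lemma DifferentiableAt.hasDerivAt_pdx {f : ℝ × ℝ → ℝ} {x y : ℝ}
    (hf : DifferentiableAt ℝ f (x, y)) : HasDerivAt (fun t => f (t, y)) (pdx f (x, y)) x :=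
  hf.hasFDerivAt.comp_hasDerivAt x ((hasDerivAt_id x).prodMk (hasDerivAt_const x y))

lemma DifferentiableAt.hasDerivAt_pdy {f : ℝ × ℝ → ℝ} {x y : ℝ}
    (hf : DifferentiableAt ℝ f (x, y)) : HasDerivAt (fun t => f (x, t)) (pdy f (x, y)) y :=
  hf.hasFDerivAt.comp_hasDerivAt y ((hasDerivAt_const y x).prodMk (hasDerivAt_id y))

lemma pdx_add {f g : ℝ × ℝ → ℝ} {p : ℝ × ℝ} (hf : DifferentiableAt ℝ f p)
    (hg : DifferentiableAt ℝ g p) : pdx (fun q => f q + g q) p = pdx f p + pdx g p := by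
  simp only [pdx, fderiv_fun_add hf hg, add_apply]

lemma pdx_sub {f g : ℝ × ℝ → ℝ} {p : ℝ × ℝ} (hf : DifferentiableAt ℝ f p)
    (hg : DifferentiableAt ℝ g p) : pdx (fun q => f q - g q) p = pdx f p - pdx g p := by
  simp only [pdx, fderiv_fun_sub hf hg, sub_apply]

lemma pdy_add {f g : ℝ × ℝ → ℝ} {p : ℝ × ℝ} (hf : DifferentiableAt ℝ f p)
    (hg : DifferentiableAt ℝ g p) : pdy (fun q => f q + g q) p = pdy f p + pdy g p := by
  simp only [pdy, fderiv_fun_add hf hg, add_apply]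

lemma pdy_sub {f g : ℝ × ℝ → ℝ} {p : ℝ × ℝ} (hf : DifferentiableAt ℝ f p)
    (hg : DifferentiableAt ℝ g p) : pdy (fun q => f q - g q) p = pdy f p - pdy g p := by
  simp only [pdy, fderiv_fun_sub hf hg, sub_apply]

lemma pdy_pdx_eq_pdx_pdy {f : ℝ × ℝ → ℝ} (hf : ContDiff ℝ 2 f) (p : ℝ × ℝ) :
    pdy (pdx f) p = pdx (pdy f) p := by
  have hd : Differentiable ℝ (fderiv ℝ f) :=
    (hf.fderiv_right (m := 1) le_rfl).differentiable one_ne_zero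
  have key : ∀ v w : ℝ × ℝ, fderiv ℝ (fun q => fderiv ℝ f q v) p w = fderiv ℝ (fderiv ℝ f) p w v :=
    fun v w => by rw [fderiv_clm_apply (hd p) (differentiableAt_const v)]; simp
  change fderiv ℝ (fun q => fderiv ℝ f q (1, 0)) p (0, 1)
    = fderiv ℝ (fun q => fderiv ℝ f q (0, 1)) p (1, 0)
  rw [key, key]
  exact (hf.contDiffAt.isSymmSndFDerivAt (by simp)) _ _

lemma abs_sub_le_sub_of_abs_deriv_le {φ φ' G G' : ℝ → ℝ} {a b : ℝ} (hab : a ≤ b)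
    (hφ : ∀ t ∈ Icc a b, HasDerivAt φ (φ' t) t) (hG : ∀ t ∈ Icc a b, HasDerivAt G (G' t) t)
    (hle : ∀ t ∈ Icc a b, |φ' t| ≤ G' t) : |φ b - φ a| ≤ G b - G a := by
  have mono : ∀ σ : ℝ, |σ| = 1 → MonotoneOn (fun t => G t - σ * φ t) (Icc a b) := by
    intro σ hσ
    have hderiv : ∀ t ∈ Icc a b, HasDerivAt (fun t => G t - σ * φ t) (G' t - σ * φ' t) t :=
      fun t ht => (hG t ht).sub ((hφ t ht).const_mul σ)
    refine monotoneOn_of_hasDerivWithinAt_nonneg (convex_Icc a b)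
      (fun t ht => (hderiv t ht).continuousAt.continuousWithinAt)
      (fun t ht => (hderiv t (interior_subset ht)).hasDerivWithinAt) fun t ht => ?_
    have := hle t (interior_subset ht)
    have : |σ * φ' t| ≤ G' t := by rwa [abs_mul, hσ, one_mul]
    linarith [le_abs_self (σ * φ' t)]
  have ha : a ∈ Icc a b := left_mem_Icc.2 hab
  have hb : b ∈ Icc a b := right_mem_Icc.2 hab
  have h1 := mono 1 abs_one ha hb hab
  have h2 := mono (-1) (by simp) ha hb hab
  simp only at h1 h2
  rw [abs_le]
  constructor <;> linarith

lemma abs_sub_le_of_abs_pdx_le_of_abs_pdy_le {f : ℝ × ℝ → ℝ} (hf : Differentiable ℝ f)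
    {X0 X1 Y0 Y1 A B : ℝ} (hA : ∀ q ∈ Icc X0 X1 ×ˢ Icc Y0 Y1, |pdx f q| ≤ A)
    (hB : ∀ q ∈ Icc X0 X1 ×ˢ Icc Y0 Y1, |pdy f q| ≤ B) {p q : ℝ × ℝ}
    (hp : p ∈ Icc X0 X1 ×ˢ Icc Y0 Y1) (hq : q ∈ Icc X0 X1 ×ˢ Icc Y0 Y1) :
    |f p - f q| ≤ A * |p.1 - q.1| + B * |p.2 - q.2| := by
  have horiz : |f (p.1, p.2) - f (q.1, p.2)| ≤ A * |p.1 - q.1| :=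
    (convex_Icc X0 X1).norm_image_sub_le_of_norm_hasDerivWithin_le
      (fun t _ => (hf _).hasDerivAt_pdx.hasDerivWithinAt)
      (fun t ht => hA (t, p.2) ⟨ht, hp.2⟩) hq.1 hp.1
  have vert : |f (q.1, p.2) - f (q.1, q.2)| ≤ B * |p.2 - q.2| :=
    (convex_Icc Y0 Y1).norm_image_sub_le_of_norm_hasDerivWithin_le
      (fun t _ => (hf _).hasDerivAt_pdy.hasDerivWithinAt)
      (fun t ht => hB (q.1, t) ⟨hq.1, ht⟩) hq.2 hp.2
  calc |f p - f q| = |(f (p.1, p.2) - f (q.1, p.2)) + (f (q.1, p.2) - f (q.1, q.2))| := by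
        ring_nf
    _ ≤ A * |p.1 - q.1| + B * |p.2 - q.2| := (abs_add_le _ _).trans (add_le_add horiz vert)

section Rectangle

variable {G G' : ℝ → ℝ} {f : ℝ × ℝ → ℝ} {X0 X1 Y0 Y1 X Y A B δ : ℝ} {p : ℝ × ℝ}

lemma abs_pdx_sub_slope_le_of_abs_pd2_le (hf : ContDiff ℝ 2 f)
    (hxx : ∀ q ∈ Icc X0 X1 ×ˢ Icc Y0 Y1, |pdx (pdx f) q| ≤ A)
    (hxy : ∀ q ∈ Icc X0 X1 ×ˢ Icc Y0 Y1, |pdy (pdx f) q| ≤ B)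
    (hX : X0 < X1) (hp : p ∈ Icc X0 X1 ×ˢ Icc Y0 Y1) (hY : Y ∈ Icc Y0 Y1) :
    |pdx f p - slope (fun t => f (t, Y)) X0 X1| ≤ A * (X1 - X0) + B * (Y1 - Y0) := by
  have hd : Differentiable ℝ f := hf.differentiable two_ne_zero
  obtain ⟨ξ, hξ, hslope⟩ := exists_hasDerivAt_eq_slope (fun t => f (t, Y)) (fun t => pdx f (t, Y))
    hX (hd.continuous.comp_continuousOn (by fun_prop)) fun t _ => (hd _).hasDerivAt_pdx
  have hξR : (ξ, Y) ∈ Icc X0 X1 ×ˢ Icc Y0 Y1 := ⟨Ioo_subset_Icc_self hξ, hY⟩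
  rw [slope_def_field, ← hslope]
  calc |pdx f p - pdx f (ξ, Y)| ≤ A * |p.1 - ξ| + B * |p.2 - Y| :=
        abs_sub_le_of_abs_pdx_le_of_abs_pdy_le ((hf.pdx (n := 1)).differentiable one_ne_zero)
          hxx hxy hp hξR
    _ ≤ A * (X1 - X0) + B * (Y1 - Y0) := by
        gcongr
        exacts [(abs_nonneg _).trans (hxx p hp),
          abs_sub_le_of_le_of_le hp.1.1 hp.1.2 hξR.1.1 hξR.1.2,
          (abs_nonneg _).trans (hxy p hp), abs_sub_le_of_le_of_le hp.2.1 hp.2.2 hY.1 hY.2]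

lemma abs_pdy_sub_slope_le_of_abs_pd2_le (hf : ContDiff ℝ 2 f)
    (hyx : ∀ q ∈ Icc X0 X1 ×ˢ Icc Y0 Y1, |pdx (pdy f) q| ≤ A)
    (hyy : ∀ q ∈ Icc X0 X1 ×ˢ Icc Y0 Y1, |pdy (pdy f) q| ≤ B)
    (hY : Y0 < Y1) (hp : p ∈ Icc X0 X1 ×ˢ Icc Y0 Y1) (hX : X ∈ Icc X0 X1) :
    |pdy f p - slope (fun t => f (X, t)) Y0 Y1| ≤ A * (X1 - X0) + B * (Y1 - Y0) := by
  have hd : Differentiable ℝ f := hf.differentiable two_ne_zero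
  obtain ⟨η, hη, hslope⟩ := exists_hasDerivAt_eq_slope (fun t => f (X, t)) (fun t => pdy f (X, t))
    hY (hd.continuous.comp_continuousOn (by fun_prop)) fun t _ => (hd _).hasDerivAt_pdy
  have hηR : (X, η) ∈ Icc X0 X1 ×ˢ Icc Y0 Y1 := ⟨hX, Ioo_subset_Icc_self hη⟩
  rw [slope_def_field, ← hslope]
  calc |pdy f p - pdy f (X, η)| ≤ A * |p.1 - X| + B * |p.2 - η| :=
        abs_sub_le_of_abs_pdx_le_of_abs_pdy_le ((hf.pdy (n := 1)).differentiable one_ne_zero)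
          hyx hyy hp hηR
    _ ≤ A * (X1 - X0) + B * (Y1 - Y0) := by
        gcongr
        exacts [(abs_nonneg _).trans (hyx p hp), abs_sub_le_of_le_of_le hp.1.1 hp.1.2 hX.1 hX.2,
          (abs_nonneg _).trans (hyy p hp), abs_sub_le_of_le_of_le hp.2.1 hp.2.2 hηR.2.1 hηR.2.2]

lemma abs_pdx_sub_slope_le_of_abs_pdx_le (hf : Differentiable ℝ f)
    (hG : ∀ t, HasDerivAt G (G' t) t) (hle : ∀ q ∈ Icc X0 X1 ×ˢ Icc Y0 Y1, |pdx f q| ≤ G' q.1)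
    (hX : X0 < X1) (hp : p ∈ Icc X0 X1 ×ˢ Icc Y0 Y1) (hY : Y ∈ Icc Y0 Y1) :
    |pdx f p - slope (fun t => f (t, Y)) X0 X1| ≤ G' p.1 + (G X1 - G X0) / (X1 - X0) := by
  have hinc : |f (X1, Y) - f (X0, Y)| ≤ G X1 - G X0 :=
    abs_sub_le_sub_of_abs_deriv_le hX.le (fun t _ => (hf _).hasDerivAt_pdx) (fun t _ => hG t)
      fun t ht => hle (t, Y) ⟨ht, hY⟩
  refine (abs_sub _ _).trans (add_le_add (hle p hp) ?_)
  rw [slope_def_field, abs_div, abs_of_pos (sub_pos.2 hX)]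
  gcongr

lemma abs_pdy_sub_slope_le_of_abs_pdy_le (hf : Differentiable ℝ f)
    (hG : ∀ t, HasDerivAt G (G' t) t) (hle : ∀ q ∈ Icc X0 X1 ×ˢ Icc Y0 Y1, |pdy f q| ≤ G' q.2)
    (hY : Y0 < Y1) (hp : p ∈ Icc X0 X1 ×ˢ Icc Y0 Y1) (hX : X ∈ Icc X0 X1) :
    |pdy f p - slope (fun t => f (X, t)) Y0 Y1| ≤ G' p.2 + (G Y1 - G Y0) / (Y1 - Y0) := by
  have hinc : |f (X, Y1) - f (X, Y0)| ≤ G Y1 - G Y0 :=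
    abs_sub_le_sub_of_abs_deriv_le hY.le (fun t _ => (hf _).hasDerivAt_pdy) (fun t _ => hG t)
      fun t ht => hle (X, t) ⟨hX, ht⟩
  refine (abs_sub _ _).trans (add_le_add (hle p hp) ?_)
  rw [slope_def_field, abs_div, abs_of_pos (sub_pos.2 hY)]
  gcongr

lemma abs_pdx_sub_slope_le_two_mul (hf : Differentiable ℝ f)
    (hle : ∀ q ∈ Icc X0 X1 ×ˢ Icc Y0 Y1, |pdx f q| ≤ δ)
    (hX : X0 < X1) (hp : p ∈ Icc X0 X1 ×ˢ Icc Y0 Y1) (hY : Y ∈ Icc Y0 Y1) :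
    |pdx f p - slope (fun t => f (t, Y)) X0 X1| ≤ 2 * δ := by
  have := abs_pdx_sub_slope_le_of_abs_pdx_le hf (G := fun t => δ * t) (G' := fun _ => δ)
    (fun t => by simpa using (hasDerivAt_id t).const_mul δ) hle hX hp hY
  rwa [← mul_sub, mul_div_cancel_right₀ _ (sub_ne_zero.2 hX.ne'), ← two_mul] at this

lemma abs_pdy_sub_slope_le_two_mul (hf : Differentiable ℝ f)
    (hle : ∀ q ∈ Icc X0 X1 ×ˢ Icc Y0 Y1, |pdy f q| ≤ δ)
    (hY : Y0 < Y1) (hp : p ∈ Icc X0 X1 ×ˢ Icc Y0 Y1) (hX : X ∈ Icc X0 X1) :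
    |pdy f p - slope (fun t => f (X, t)) Y0 Y1| ≤ 2 * δ := by
  have := abs_pdy_sub_slope_le_of_abs_pdy_le hf (G := fun t => δ * t) (G' := fun _ => δ)
    (fun t => by simpa using (hasDerivAt_id t).const_mul δ) hle hY hp hX
  rwa [← mul_sub, mul_div_cancel_right₀ _ (sub_ne_zero.2 hY.ne'), ← two_mul] at this

end Rectangle

lemma IsBilinearOn.exists_pdx_pdy_eq {f : ℝ × ℝ → ℝ} {s : Set (ℝ × ℝ)} {p : ℝ × ℝ}
    (h : IsBilinearOn f s) (hs : s ∈ nhds p) :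
    ∃ a b c d : ℝ, (∀ q ∈ s, f q = a + b * q.1 + c * q.2 + d * (q.1 * q.2)) ∧
      DifferentiableAt ℝ f p ∧ pdx f p = b + d * p.2 ∧ pdy f p = c + d * p.1 := by
  obtain ⟨a, b, c, d, hf⟩ := h
  set P : ℝ × ℝ → ℝ := fun q => a + b * q.1 + c * q.2 + d * (q.1 * q.2)
  have hP : Differentiable ℝ P := by fun_prop
  have hfP : f =ᶠ[nhds p] P := Filter.eventuallyEq_of_mem hs hf
  have hpdx : pdx f p = pdx P p := by simp only [pdx, hfP.fderiv_eq]
  have hpdy : pdy f p = pdy P p := by simp only [pdy, hfP.fderiv_eq]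
  have hx : HasDerivAt (fun t => P (t, p.2)) (b + d * p.2) p.1 :=
    (((((hasDerivAt_id p.1).const_mul b).const_add a).add_const (c * p.2)).add
      (((hasDerivAt_id p.1).mul_const p.2).const_mul d)).congr_deriv (by simp)
  have hy : HasDerivAt (fun t => P (p.1, t)) (c + d * p.1) p.2 :=
    ((((hasDerivAt_id p.2).const_mul c).const_add (a + b * p.1)).add
      (((hasDerivAt_id p.2).const_mul p.1).const_mul d)).congr_deriv (by simp)
  refine ⟨a, b, c, d, hf, (hP p).congr_of_eventuallyEq hfP, ?_, ?_⟩
  · rw [hpdx, hx.unique (hP (p.1, p.2)).hasDerivAt_pdx]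
  · rw [hpdy, hy.unique (hP (p.1, p.2)).hasDerivAt_pdy]

lemma abs_sub_le_of_mem_segment {a e₀ e₁ v B : ℝ} (hv : v ∈ segment ℝ e₀ e₁)
    (h₀ : |a - e₀| ≤ B) (h₁ : |a - e₁| ≤ B) : |a - v| ≤ B := by
  have := (convex_closedBall a B).segment_subset (x := e₀) (y := e₁)
    (by rwa [Metric.mem_closedBall, Real.dist_eq, abs_sub_comm])
    (by rwa [Metric.mem_closedBall, Real.dist_eq, abs_sub_comm]) hv
  rwa [Metric.mem_closedBall, Real.dist_eq, abs_sub_comm] at this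

lemma mem_segment_affine {b d Y0 Y1 y : ℝ} (hy : y ∈ Icc Y0 Y1) (hY : Y0 < Y1) :
    b + d * y ∈ segment ℝ (b + d * Y0) (b + d * Y1) := by
  rw [segment_eq_image]
  refine ⟨(y - Y0) / (Y1 - Y0), ⟨div_nonneg (by linarith [hy.1]) (by linarith),
    (div_le_one (by linarith)).2 (by linarith [hy.2])⟩, ?_⟩
  simp only [smul_eq_mul]
  field_simp [sub_ne_zero.2 hY.ne']
  ring

lemma mem_Icc_of_mem_pair {Z0 Z1 Z : ℝ} (hZ : Z0 < Z1) (h : Z ∈ ({Z0, Z1} : Set ℝ)) :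
    Z ∈ Icc Z0 Z1 := by
  rcases h with rfl | rfl
  exacts [left_mem_Icc.2 hZ.le, right_mem_Icc.2 hZ.le]

def IsBilinearInterpolantOn (g gI : ℝ × ℝ → ℝ) (X0 X1 Y0 Y1 : ℝ) : Prop :=
  IsBilinearOn gI (Icc X0 X1 ×ˢ Icc Y0 Y1) ∧
    ∀ X ∈ ({X0, X1} : Set ℝ), ∀ Y ∈ ({Y0, Y1} : Set ℝ), gI (X, Y) = g (X, Y)

namespace IsBilinearInterpolantOn

variable {g gI : ℝ × ℝ → ℝ} {X0 X1 Y0 Y1 B : ℝ} {p : ℝ × ℝ}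

lemma rect_mem_nhds (hp : p ∈ Ioo X0 X1 ×ˢ Ioo Y0 Y1) : Icc X0 X1 ×ˢ Icc Y0 Y1 ∈ nhds p :=
  Filter.mem_of_superset ((isOpen_Ioo.prod isOpen_Ioo).mem_nhds hp)
    (prod_mono Ioo_subset_Icc_self Ioo_subset_Icc_self)

/-- `∂ₓ gI` is affine in `y`, so it lies between its values on the bottom and top edges,
where it equals the difference quotients of `g`. -/
lemma abs_pdx_sub_le (hI : IsBilinearInterpolantOn g gI X0 X1 Y0 Y1)
    (hp : p ∈ Ioo X0 X1 ×ˢ Ioo Y0 Y1) (hg : DifferentiableAt ℝ g p)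
    (hB : ∀ Y ∈ ({Y0, Y1} : Set ℝ), |pdx g p - slope (fun t => g (t, Y)) X0 X1| ≤ B) :
    |pdx (fun q => g q - gI q) p| ≤ B := by
  obtain ⟨a, b, c, d, hgI, hd, hpdx, -⟩ := hI.1.exists_pdx_pdy_eq (rect_mem_nhds hp)
  have hX : X0 < X1 := hp.1.1.trans hp.1.2
  have hY : Y0 < Y1 := hp.2.1.trans hp.2.2
  have hslope : ∀ Y ∈ ({Y0, Y1} : Set ℝ), slope (fun t => g (t, Y)) X0 X1 = b + d * Y := by
    intro Y hYm
    rw [slope_def_field, ← hI.2 X1 (by simp) Y hYm, ← hI.2 X0 (by simp) Y hYm,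
      hgI _ ⟨right_mem_Icc.2 hX.le, mem_Icc_of_mem_pair hY hYm⟩,
      hgI _ ⟨left_mem_Icc.2 hX.le, mem_Icc_of_mem_pair hY hYm⟩]
    field_simp [sub_ne_zero.2 hX.ne']
    ring
  rw [pdx_sub hg hd, hpdx]
  refine abs_sub_le_of_mem_segment (mem_segment_affine ⟨hp.2.1.le, hp.2.2.le⟩ hY) ?_ ?_
  · simpa [hslope] using hB Y0 (by simp)
  · simpa [hslope] using hB Y1 (by simp)

lemma abs_pdy_sub_le (hI : IsBilinearInterpolantOn g gI X0 X1 Y0 Y1)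
    (hp : p ∈ Ioo X0 X1 ×ˢ Ioo Y0 Y1) (hg : DifferentiableAt ℝ g p)
    (hB : ∀ X ∈ ({X0, X1} : Set ℝ), |pdy g p - slope (fun t => g (X, t)) Y0 Y1| ≤ B) :
    |pdy (fun q => g q - gI q) p| ≤ B := by
  obtain ⟨a, b, c, d, hgI, hd, -, hpdy⟩ := hI.1.exists_pdx_pdy_eq (rect_mem_nhds hp)
  have hX : X0 < X1 := hp.1.1.trans hp.1.2
  have hY : Y0 < Y1 := hp.2.1.trans hp.2.2
  have hslope : ∀ X ∈ ({X0, X1} : Set ℝ), slope (fun t => g (X, t)) Y0 Y1 = c + d * X := by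
    intro X hXm
    rw [slope_def_field, ← hI.2 X hXm Y1 (by simp), ← hI.2 X hXm Y0 (by simp),
      hgI _ ⟨mem_Icc_of_mem_pair hX hXm, right_mem_Icc.2 hY.le⟩,
      hgI _ ⟨mem_Icc_of_mem_pair hX hXm, left_mem_Icc.2 hY.le⟩]
    field_simp [sub_ne_zero.2 hY.ne']
    ring
  rw [pdy_sub hg hd, hpdy]
  refine abs_sub_le_of_mem_segment (mem_segment_affine ⟨hp.1.1.le, hp.1.2.le⟩ hX) ?_ ?_
  · simpa [hslope] using hB X0 (by simp)
  · simpa [hslope] using hB X1 (by simp)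

end IsBilinearInterpolantOn

def layerX (β ε x : ℝ) : ℝ := exp (-β * (1 - x) / ε)

def layerY (ε y : ℝ) : ℝ := exp (-y / √ε) + exp (-(1 - y) / √ε)

lemma layerX_pos (β ε x : ℝ) : 0 < layerX β ε x := exp_pos _

lemma layerY_pos (ε y : ℝ) : 0 < layerY ε y := by unfold layerY; positivity

lemma layerX_le_one {β ε x : ℝ} (hβ : 0 ≤ β) (hε : 0 ≤ ε) (hx : x ≤ 1) : layerX β ε x ≤ 1 :=
  exp_le_one_iff.2 (div_nonpos_of_nonpos_of_nonneg (by nlinarith) hε)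

lemma layerY_le_two {ε y : ℝ} (hy : y ∈ Icc (0 : ℝ) 1) : layerY ε y ≤ 2 := by
  have h0 : exp (-y / √ε) ≤ 1 :=
    exp_le_one_iff.2 (div_nonpos_of_nonpos_of_nonneg (by linarith [hy.1]) (sqrt_nonneg ε))
  have h1 : exp (-(1 - y) / √ε) ≤ 1 :=
    exp_le_one_iff.2 (div_nonpos_of_nonpos_of_nonneg (by linarith [hy.2]) (sqrt_nonneg ε))
  unfold layerY
  linarith

lemma hasDerivAt_layerX {β : ℝ} (ε : ℝ) (hβ : β ≠ 0) (x : ℝ) :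
    HasDerivAt (fun x => β⁻¹ * layerX β ε x) (ε⁻¹ * layerX β ε x) x := by
  have h : HasDerivAt (fun x => -β * (1 - x) / ε) (β / ε) x := by
    simpa using (((hasDerivAt_id x).const_sub 1).const_mul (-β)).div_const ε
  exact (h.exp.const_mul β⁻¹).congr_deriv (by unfold layerX; field_simp)

lemma hasDerivAt_layerY (ε y : ℝ) :
    HasDerivAt (fun y => exp (-(1 - y) / √ε) - exp (-y / √ε)) ((√ε)⁻¹ * layerY ε y) y := by
  have h0 : HasDerivAt (fun y => -y / √ε) (-1 / √ε) y := by
    simpa using (hasDerivAt_id y).neg.div_const √ε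
  have h1 : HasDerivAt (fun y => -(1 - y) / √ε) (1 / √ε) y := by
    simpa using ((hasDerivAt_id y).const_sub 1).neg.div_const √ε
  exact (h1.exp.sub h0.exp).congr_deriv (by unfold layerY; ring)

lemma continuous_layerX (β ε : ℝ) : Continuous (layerX β ε) := by
  unfold layerX; fun_prop

lemma continuous_layerY (ε : ℝ) : Continuous (layerY ε) := by
  unfold layerY; fun_prop

lemma rpow_neg_one_div_two {ε : ℝ} (hε : 0 ≤ ε) : ε ^ (-1 / 2 : ℝ) = (√ε)⁻¹ := by
  rw [sqrt_eq_rpow, ← rpow_neg hε, neg_div]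

namespace BoundS

variable {C0 : ℝ} {S : ℝ × ℝ → ℝ} {q : ℝ × ℝ}

lemma abs_pdx_pdx_le (h : BoundS C0 S) (hq : q ∈ UnitSq) : |pdx (pdx S) q| ≤ C0 :=
  h.2 2 0 (by norm_num) q hq

lemma abs_pdx_pdy_le (h : BoundS C0 S) (hq : q ∈ UnitSq) : |pdx (pdy S) q| ≤ C0 :=
  h.2 1 1 (by norm_num) q hq

lemma abs_pdy_pdy_le (h : BoundS C0 S) (hq : q ∈ UnitSq) : |pdy (pdy S) q| ≤ C0 :=
  h.2 0 2 (by norm_num) q hq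

lemma abs_pdy_pdx_le (h : BoundS C0 S) (hq : q ∈ UnitSq) : |pdy (pdx S) q| ≤ C0 := by
  rw [pdy_pdx_eq_pdx_pdy (h.1.of_le (by norm_num))]
  exact h.abs_pdx_pdy_le hq

end BoundS

namespace BoundE1

variable {ε β C0 : ℝ} {E1 : ℝ × ℝ → ℝ} {q : ℝ × ℝ}

lemma abs_pdx_le (h : BoundE1 ε β C0 E1) (hq : q ∈ UnitSq) :
    |pdx E1 q| ≤ C0 * ε⁻¹ * layerX β ε q.1 := by
  have key := h.2 1 0 (by norm_num) q hq
  rwa [Nat.cast_one, rpow_neg_one] at key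

lemma abs_pdy_le (h : BoundE1 ε β C0 E1) (hq : q ∈ UnitSq) :
    |pdy E1 q| ≤ C0 * layerX β ε q.1 := by
  have key := h.2 0 1 (by norm_num) q hq
  rwa [Nat.cast_zero, neg_zero, rpow_zero, mul_one] at key

end BoundE1

namespace BoundE2

variable {ε C0 : ℝ} {E2 : ℝ × ℝ → ℝ} {q : ℝ × ℝ}

lemma abs_pdx_le (h : BoundE2 ε C0 E2) (hq : q ∈ UnitSq) :
    |pdx E2 q| ≤ C0 * layerY ε q.2 := by
  have key := h.2 1 0 (by norm_num) q hq
  rwa [Nat.cast_zero, neg_zero, zero_div, rpow_zero, mul_one] at key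

lemma abs_pdy_le (h : BoundE2 ε C0 E2) (hε : 0 ≤ ε) (hq : q ∈ UnitSq) :
    |pdy E2 q| ≤ C0 * (√ε)⁻¹ * layerY ε q.2 := by
  have key := h.2 0 1 (by norm_num) q hq
  rwa [show -((1 : ℕ) : ℝ) / 2 = -1 / 2 by norm_num, rpow_neg_one_div_two hε] at key

end BoundE2

namespace BoundE12

variable {ε β C0 : ℝ} {E12 : ℝ × ℝ → ℝ} {q : ℝ × ℝ}

lemma abs_pdx_le (h : BoundE12 ε β C0 E12) (hq : q ∈ UnitSq) :
    |pdx E12 q| ≤ C0 * ε⁻¹ * layerX β ε q.1 * layerY ε q.2 := by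
  have key := h.2 1 0 (by norm_num) q hq
  rwa [show -(((1 : ℕ) : ℝ) + ((0 : ℕ) : ℝ) / 2) = -1 by norm_num, rpow_neg_one] at key

lemma abs_pdy_le (h : BoundE12 ε β C0 E12) (hε : 0 ≤ ε) (hq : q ∈ UnitSq) :
    |pdy E12 q| ≤ C0 * (√ε)⁻¹ * layerX β ε q.1 * layerY ε q.2 := by
  have key := h.2 0 1 (by norm_num) q hq
  rwa [show -(((0 : ℕ) : ℝ) + ((1 : ℕ) : ℝ) / 2) = -1 / 2 by norm_num,
    rpow_neg_one_div_two hε] at key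

end BoundE12

lemma div_le_mul_of_le_mul_sq {a c h w : ℝ} (ha : a ≤ c * h ^ 2) (hc : 0 ≤ c) (hh : 0 < h)
    (hw : h ≤ w) : a / w ≤ c * h := by
  rw [div_le_iff₀ (hh.trans_le hw)]
  nlinarith [mul_le_mul_of_nonneg_left hw (mul_nonneg hc hh.le)]

lemma exists_lt_mem_Ioo_of_ne_grid {a h z : ℝ} {m : ℕ} (hh : 0 < h) (hz : z ∈ Icc a (a + m * h))
    (hne : ∀ k ≤ m, z ≠ a + k * h) : ∃ k < m, z ∈ Ioo (a + k * h) (a + (k + 1) * h) := by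
  set k := ⌊(z - a) / h⌋₊
  have hk : k * h ≤ z - a :=
    (le_div_iff₀ hh).1 (Nat.floor_le (div_nonneg (by linarith [hz.1]) hh.le))
  have hk' : z - a < (k + 1) * h := (div_lt_iff₀ hh).1 (Nat.lt_floor_add_one _)
  have hkm : k ≤ m := by
    have : (k : ℝ) ≤ m := le_of_mul_le_mul_right (by linarith [hz.2]) hh
    exact_mod_cast this
  have hlt : a + k * h < z := lt_of_le_of_ne (by linarith) (hne k hkm).symm
  refine ⟨k, lt_of_le_of_ne hkm fun hkm' => ?_, hlt, by linarith⟩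
  rw [hkm'] at hlt
  linarith [hz.2]

lemma meshX_of_le {N : ℕ} (lx : ℝ) {i : ℕ} (hi : i ≤ N / 2) :
    meshX N lx i = i * (2 * (1 - lx) / N) := by
  rw [meshX, if_pos hi]
  ring

lemma meshY_of_le {N : ℕ} (ly : ℝ) (hN : 0 < N) (h3 : 3 ∣ N) {j : ℕ} (hj : j ≤ N / 3) :
    meshY N ly (N / 3 + j) = ly + j * (3 * (1 - 2 * ly) / N) := by
  obtain ⟨m, rfl⟩ := h3
  have hm : (0 : ℝ) < m := by exact_mod_cast (by omega : 0 < m)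
  rw [Nat.mul_div_cancel_left m three_pos] at hj ⊢
  rw [meshY, Nat.mul_div_cancel_left m three_pos]
  split_ifs
  · obtain rfl : j = 0 := by omega
    push_cast; field_simp; ring
  · push_cast; field_simp; ring
  · omega

lemma IsMeshInterpolant.isBilinearInterpolantOn {N : ℕ} {lx ly : ℝ} {g gI : ℝ × ℝ → ℝ}
    (hI : IsMeshInterpolant N lx ly g gI) {i j : ℕ} (hi : i < N) (hj : j < N) :
    IsBilinearInterpolantOn g gI (meshX N lx i) (meshX N lx (i + 1))
      (meshY N ly j) (meshY N ly (j + 1)) := by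
  refine ⟨by simpa [meshRect] using hI.2.1 (i + 1) (j + 1) (by omega) hi (by omega) hj, ?_⟩
  rintro X (rfl | rfl) Y (rfl | rfl) <;> exact hI.2.2 _ _ (by omega) (by omega)

lemma setIntegral_Icc_prod_Icc_add {a b c d : ℝ} (hab : a ≤ b) (hcd : c ≤ d) {f g : ℝ → ℝ}
    (hf : Continuous f) (hg : Continuous g) :
    ∫ p in Icc a b ×ˢ Icc c d, (f p.1 + g p.2)
      = (d - c) * (∫ x in a..b, f x) + (b - a) * ∫ y in c..d, g y := by
  have hfst : ∫ p in Icc a b ×ˢ Icc c d, f p.1 = (d - c) * ∫ x in a..b, f x := by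
    have := setIntegral_prod_mul (μ := volume) (ν := volume) f (fun _ => (1 : ℝ)) (Icc a b)
      (Icc c d)
    rw [← Measure.volume_eq_prod] at this
    simp only [mul_one] at this
    rw [this, setIntegral_const, smul_eq_mul, mul_one, Real.volume_real_Icc_of_le hcd,
      integral_Icc_eq_integral_Ioc, ← intervalIntegral.integral_of_le hab, mul_comm]
  have hsnd : ∫ p in Icc a b ×ˢ Icc c d, g p.2 = (b - a) * ∫ y in c..d, g y := by
    have := setIntegral_prod_mul (μ := volume) (ν := volume) (fun _ => (1 : ℝ)) g (Icc a b)
      (Icc c d)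
    rw [← Measure.volume_eq_prod] at this
    simp only [one_mul] at this
    rw [this, setIntegral_const, smul_eq_mul, mul_one, Real.volume_real_Icc_of_le hab,
      integral_Icc_eq_integral_Ioc, ← intervalIntegral.integral_of_le hcd]
  have hcpt : IsCompact (Icc a b ×ˢ Icc c d) := isCompact_Icc.prod isCompact_Icc
  rw [integral_add (f := fun p : ℝ × ℝ => f p.1) (g := fun p : ℝ × ℝ => g p.2)
    ((hf.comp continuous_fst).continuousOn.integrableOn_compact hcpt)
    ((hg.comp continuous_snd).continuousOn.integrableOn_compact hcpt), hfst, hsnd]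

lemma ae_fst_notMem_and_snd_notMem {A B : Set ℝ} (hA : A.Countable) (hB : B.Countable) :
    ∀ᵐ p : ℝ × ℝ, p.1 ∉ A ∧ p.2 ∉ B := by
  have hA0 : volume (A ×ˢ (univ : Set ℝ)) = 0 := by
    rw [Measure.volume_eq_prod, Measure.prod_prod, hA.measure_zero, zero_mul]
  have hB0 : volume ((univ : Set ℝ) ×ˢ B) = 0 := by
    rw [Measure.volume_eq_prod, Measure.prod_prod, hB.measure_zero, mul_zero]
  refine ae_iff.2 (measure_mono_null (fun p hp => ?_) (measure_union_null hA0 hB0))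
  by_cases h : p.1 ∈ A
  · exact Or.inl ⟨h, mem_univ _⟩
  · exact Or.inr ⟨mem_univ _, by_contra fun h' => hp ⟨h, h'⟩⟩

lemma abs_add_add_add_le (a b c d : ℝ) : |a + b + c + d| ≤ |a| + |b| + |c| + |d| := by
  linarith [abs_add_le (a + b + c) d, abs_add_three a b c]

lemma pdx_sub_slope_eq_add {u S E1 E2 E12 : ℝ × ℝ → ℝ} {p : ℝ × ℝ} {X0 X1 Y : ℝ}
    (hu : ∀ q, u q = S q + E1 q + E2 q + E12 q) (hS : Differentiable ℝ S)
    (hE1 : Differentiable ℝ E1) (hE2 : Differentiable ℝ E2) (hE12 : Differentiable ℝ E12) :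
    pdx u p - slope (fun t => u (t, Y)) X0 X1
      = (pdx S p - slope (fun t => S (t, Y)) X0 X1) + (pdx E1 p - slope (fun t => E1 (t, Y)) X0 X1)
        + (pdx E2 p - slope (fun t => E2 (t, Y)) X0 X1)
        + (pdx E12 p - slope (fun t => E12 (t, Y)) X0 X1) := by
  obtain rfl : u = fun q => S q + E1 q + E2 q + E12 q := funext hu
  rw [pdx_add (by fun_prop) (by fun_prop), pdx_add (by fun_prop) (by fun_prop),
    pdx_add (by fun_prop) (by fun_prop)]
  simp only [slope_def_field]
  ring

lemma pdy_sub_slope_eq_add {u S E1 E2 E12 : ℝ × ℝ → ℝ} {p : ℝ × ℝ} {X Y0 Y1 : ℝ}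
    (hu : ∀ q, u q = S q + E1 q + E2 q + E12 q) (hS : Differentiable ℝ S)
    (hE1 : Differentiable ℝ E1) (hE2 : Differentiable ℝ E2) (hE12 : Differentiable ℝ E12) :
    pdy u p - slope (fun t => u (X, t)) Y0 Y1
      = (pdy S p - slope (fun t => S (X, t)) Y0 Y1) + (pdy E1 p - slope (fun t => E1 (X, t)) Y0 Y1)
        + (pdy E2 p - slope (fun t => E2 (X, t)) Y0 Y1)
        + (pdy E12 p - slope (fun t => E12 (X, t)) Y0 Y1) := by
  obtain rfl : u = fun q => S q + E1 q + E2 q + E12 q := funext hu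
  rw [pdy_add (by fun_prop) (by fun_prop), pdy_add (by fun_prop) (by fun_prop),
    pdy_add (by fun_prop) (by fun_prop)]
  simp only [slope_def_field]
  ring

namespace ShishkinHyp

variable {N : ℕ} {ε β lx ly c : ℝ} {f : ℝ × ℝ → ℝ} {X0 X1 Y0 Y1 X Y : ℝ} {p : ℝ × ℝ}

lemma one_le_N (h : ShishkinHyp N ε β lx ly) : (1 : ℝ) ≤ N := by
  exact_mod_cast h.1

lemma inv_N_pos (h : ShishkinHyp N ε β lx ly) : 0 < (N : ℝ)⁻¹ :=
  inv_pos.2 (zero_lt_one.trans_le h.one_le_N)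

lemma eps_pos (h : ShishkinHyp N ε β lx ly) : 0 < ε := h.2.2.1

lemma beta_pos (h : ShishkinHyp N ε β lx ly) : 0 < β := h.2.2.2.2.1

lemma lx_nonneg (h : ShishkinHyp N ε β lx ly) : 0 ≤ lx := by
  rw [h.2.2.2.2.2.1]
  have := h.eps_pos; have := h.beta_pos; have := log_nonneg h.one_le_N
  positivity

lemma ly_nonneg (h : ShishkinHyp N ε β lx ly) : 0 ≤ ly := by
  rw [h.2.2.2.2.2.2.1]
  have := log_nonneg h.one_le_N
  positivity

lemma omegaS_subset_unitSq (h : ShishkinHyp N ε β lx ly) : OmegaS lx ly ⊆ UnitSq := by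
  have := h.lx_nonneg; have := h.ly_nonneg
  rintro q ⟨⟨hx0, hx1⟩, hy0, hy1⟩
  exact ⟨⟨hx0, by linarith⟩, by linarith, by linarith⟩

/-- With `ρ = 2.5`, the layers have decayed to `N^{-ρ} ≤ N^{-2}` at the transition points. -/
lemma exp_neg_le_inv_sq (h : ShishkinHyp N ε β lx ly) ⦃t : ℝ⦄ (ht : 2.5 * log N ≤ t) :
    exp (-t) ≤ ((N : ℝ)⁻¹) ^ 2 := by
  have hN := h.one_le_N
  have hlog : 0 ≤ log N := log_nonneg hN
  calc exp (-t) ≤ exp (-(2 * log N)) := exp_le_exp.2 (by linarith)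
    _ = ((N : ℝ)⁻¹) ^ 2 := by
      rw [exp_neg, ← log_rpow (by linarith), exp_log (by positivity)]
      norm_num

lemma layerX_le (h : ShishkinHyp N ε β lx ly) {x : ℝ} (hx : x ≤ 1 - lx) :
    layerX β ε x ≤ ((N : ℝ)⁻¹) ^ 2 := by
  have hexp := h.exp_neg_le_inv_sq
  obtain ⟨-, -, hε, -, hβ, hlx, -⟩ := h
  have key : 2.5 * log N ≤ β * (1 - x) / ε := by
    rw [le_div_iff₀ hε]
    nlinarith [show β * lx = 2.5 * log N * ε by rw [hlx]; field_simp]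
  simpa [layerX, neg_mul, neg_div] using hexp key

lemma exp_le (h : ShishkinHyp N ε β lx ly) {y : ℝ} (hy : ly ≤ y) :
    exp (-y / √ε) ≤ ((N : ℝ)⁻¹) ^ 2 := by
  have hexp := h.exp_neg_le_inv_sq
  obtain ⟨-, -, hε, -, -, -, hly, -⟩ := h
  have hσ : 0 < √ε := sqrt_pos.2 hε
  have key : 2.5 * log N ≤ y / √ε := by
    rw [le_div_iff₀ hσ]
    linarith [show ly = 2.5 * log N * √ε by rw [hly]; ring]
  simpa [neg_div] using hexp key

lemma layerY_le (h : ShishkinHyp N ε β lx ly) {y : ℝ} (hy : y ∈ Icc ly (1 - ly)) :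
    layerY ε y ≤ 2 * ((N : ℝ)⁻¹) ^ 2 := by
  have h1 := h.exp_le hy.1
  have h2 := h.exp_le (y := 1 - y) (by linarith [hy.2])
  unfold layerY
  linarith

lemma abs_pdx_sub_slope_le_of_layerX (h : ShishkinHyp N ε β lx ly) (hc : 0 ≤ c)
    (hf : Differentiable ℝ f) (hR : Icc X0 X1 ×ˢ Icc Y0 Y1 ⊆ OmegaS lx ly)
    (hle : ∀ q ∈ Icc X0 X1 ×ˢ Icc Y0 Y1, |pdx f q| ≤ c * ε⁻¹ * layerX β ε q.1)
    (hw : (N : ℝ)⁻¹ ≤ X1 - X0) (hp : p ∈ Icc X0 X1 ×ˢ Icc Y0 Y1) (hY : Y ∈ Icc Y0 Y1) :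
    |pdx f p - slope (fun t => f (t, Y)) X0 X1|
      ≤ c * ε⁻¹ * layerX β ε p.1 + c / β * (N : ℝ)⁻¹ := by
  have hX : X0 < X1 := by linarith [h.inv_N_pos]
  have hX1 : layerX β ε X1 ≤ ((N : ℝ)⁻¹) ^ 2 :=
    h.layerX_le (@hR (X1, Y) ⟨right_mem_Icc.2 hX.le, hY⟩).1.2
  have hincr := div_le_mul_of_le_mul_sq (c := c / β)
    (a := c * (β⁻¹ * layerX β ε X1) - c * (β⁻¹ * layerX β ε X0))
    (by
      have hcβ : 0 ≤ c * β⁻¹ := mul_nonneg hc (inv_nonneg.2 h.beta_pos.le)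
      rw [div_eq_mul_inv]
      nlinarith [mul_le_mul_of_nonneg_left hX1 hcβ, mul_nonneg hcβ (layerX_pos β ε X0).le])
    (div_nonneg hc h.beta_pos.le) h.inv_N_pos hw
  refine (abs_pdx_sub_slope_le_of_abs_pdx_le hf (G := fun t => c * (β⁻¹ * layerX β ε t))
    (G' := fun t => c * (ε⁻¹ * layerX β ε t))
    (fun t => (hasDerivAt_layerX ε h.beta_pos.ne' t).const_mul c)
    (fun q hq => (hle q hq).trans_eq (by ring)) hX hp hY).trans ?_
  linarith

lemma abs_pdy_sub_slope_le_of_layerY (h : ShishkinHyp N ε β lx ly) (hc : 0 ≤ c)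
    (hf : Differentiable ℝ f) (hR : Icc X0 X1 ×ˢ Icc Y0 Y1 ⊆ OmegaS lx ly)
    (hle : ∀ q ∈ Icc X0 X1 ×ˢ Icc Y0 Y1, |pdy f q| ≤ c * (√ε)⁻¹ * layerY ε q.2)
    (hw : (N : ℝ)⁻¹ ≤ Y1 - Y0) (hp : p ∈ Icc X0 X1 ×ˢ Icc Y0 Y1) (hX : X ∈ Icc X0 X1) :
    |pdy f p - slope (fun t => f (X, t)) Y0 Y1|
      ≤ c * (√ε)⁻¹ * layerY ε p.2 + 2 * c * (N : ℝ)⁻¹ := by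
  have hY : Y0 < Y1 := by linarith [h.inv_N_pos]
  have hY0 := h.exp_le (@hR (X, Y0) ⟨hX, left_mem_Icc.2 hY.le⟩).2.1
  have hY1 := h.exp_le (y := 1 - Y1) (by linarith [(@hR (X, Y1) ⟨hX, right_mem_Icc.2 hY.le⟩).2.2])
  have hincr := div_le_mul_of_le_mul_sq (c := 2 * c)
    (a := c * (exp (-(1 - Y1) / √ε) - exp (-Y1 / √ε))
      - c * (exp (-(1 - Y0) / √ε) - exp (-Y0 / √ε)))
    (by have := exp_pos (-Y1 / √ε); have := exp_pos (-(1 - Y0) / √ε); nlinarith)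
    (by positivity) h.inv_N_pos hw
  refine (abs_pdy_sub_slope_le_of_abs_pdy_le hf
    (G := fun t => c * (exp (-(1 - t) / √ε) - exp (-t / √ε)))
    (G' := fun t => c * ((√ε)⁻¹ * layerY ε t))
    (fun t => (hasDerivAt_layerY ε t).const_mul c)
    (fun q hq => (hle q hq).trans_eq (by ring)) hY hp hX).trans ?_
  linarith

lemma exists_meshX_cell (h : ShishkinHyp N ε β lx ly) {x : ℝ} (hx : x ∈ Icc 0 (1 - lx))
    (hxm : x ∉ range (meshX N lx)) :
    ∃ i < N, x ∈ Ioo (meshX N lx i) (meshX N lx (i + 1)) ∧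
      Icc (meshX N lx i) (meshX N lx (i + 1)) ⊆ Icc 0 (1 - lx) ∧
      (N : ℝ)⁻¹ ≤ meshX N lx (i + 1) - meshX N lx i ∧
      meshX N lx (i + 1) - meshX N lx i ≤ 3 * (N : ℝ)⁻¹ := by
  have hlx0 := h.lx_nonneg
  obtain ⟨hN, h6, -, -, -, -, -, hlx, -⟩ := h
  have hNpos : (0 : ℝ) < N := by exact_mod_cast hN
  have hhalf : ((N / 2 : ℕ) : ℝ) = N / 2 :=
    Nat.cast_div (dvd_trans (by norm_num) h6) two_ne_zero
  set w := 2 * (1 - lx) / N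
  have hw : 0 < w := div_pos (by linarith) hNpos
  have hgrid : 0 + ((N / 2 : ℕ) : ℝ) * w = 1 - lx := by
    rw [hhalf]; simp only [w]; field_simp; ring
  obtain ⟨i, hi, hxi⟩ := exists_lt_mem_Ioo_of_ne_grid hw (hgrid ▸ hx) fun k hk hxk =>
    hxm ⟨k, by rw [meshX_of_le lx hk, hxk, zero_add]⟩
  have hX0 : meshX N lx i = 0 + i * w := by rw [meshX_of_le lx hi.le, zero_add]
  have hX1 : meshX N lx (i + 1) = 0 + (i + 1) * w := by
    rw [meshX_of_le lx hi, zero_add]; push_cast; ring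
  have hi1 : (i : ℝ) + 1 ≤ ((N / 2 : ℕ) : ℝ) := by exact_mod_cast hi
  refine ⟨i, by omega, hX0 ▸ hX1 ▸ hxi, ?_, ?_, ?_⟩
  · rw [hX0, hX1]
    exact Icc_subset_Icc (by positivity) (hgrid ▸ by gcongr)
  · rw [hX0, hX1, ← sub_nonneg]
    simp only [w]; field_simp; linarith
  · rw [hX0, hX1, ← sub_nonneg]
    simp only [w]; field_simp; linarith

lemma exists_meshY_cell (h : ShishkinHyp N ε β lx ly) {y : ℝ} (hy : y ∈ Icc ly (1 - ly))
    (hym : y ∉ range (meshY N ly)) :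
    ∃ j < N, y ∈ Ioo (meshY N ly j) (meshY N ly (j + 1)) ∧
      Icc (meshY N ly j) (meshY N ly (j + 1)) ⊆ Icc ly (1 - ly) ∧
      (N : ℝ)⁻¹ ≤ meshY N ly (j + 1) - meshY N ly j ∧
      meshY N ly (j + 1) - meshY N ly j ≤ 3 * (N : ℝ)⁻¹ := by
  have hly0 := h.ly_nonneg
  obtain ⟨hN, h6, -, -, -, -, -, -, hly⟩ := h
  have h3 : 3 ∣ N := dvd_trans (by norm_num) h6
  have hNpos : (0 : ℝ) < N := by exact_mod_cast hN
  have hthird : ((N / 3 : ℕ) : ℝ) = N / 3 := Nat.cast_div h3 three_ne_zero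
  set w := 3 * (1 - 2 * ly) / N
  have hw : 0 < w := div_pos (by linarith) hNpos
  have hgrid : ly + ((N / 3 : ℕ) : ℝ) * w = 1 - ly := by
    rw [hthird]; simp only [w]; field_simp; ring
  obtain ⟨j, hj, hyj⟩ := exists_lt_mem_Ioo_of_ne_grid hw (hgrid ▸ hy) fun k hk hyk =>
    hym ⟨N / 3 + k, by rw [meshY_of_le ly hN h3 hk, hyk]⟩
  have hY0 : meshY N ly (N / 3 + j) = ly + j * w := meshY_of_le ly hN h3 hj.le
  have hY1 : meshY N ly (N / 3 + j + 1) = ly + (j + 1) * w := by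
    rw [add_assoc, meshY_of_le ly hN h3 hj]; push_cast; ring
  have hj1 : (j : ℝ) + 1 ≤ ((N / 3 : ℕ) : ℝ) := by exact_mod_cast hj
  refine ⟨N / 3 + j, by omega, hY0 ▸ hY1 ▸ hyj, ?_, ?_, ?_⟩
  · rw [hY0, hY1]
    exact Icc_subset_Icc (by nlinarith) (hgrid ▸ by gcongr)
  · rw [hY0, hY1, ← sub_nonneg]
    simp only [w]; field_simp; linarith
  · rw [hY0, hY1, ← sub_nonneg]
    simp only [w]; field_simp; linarith

lemma exists_interpolant_cell {g gI : ℝ × ℝ → ℝ} (h : ShishkinHyp N ε β lx ly)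
    (hI : IsMeshInterpolant N lx ly g gI)
    (hp : p ∈ OmegaS lx ly) (hpx : p.1 ∉ range (meshX N lx)) (hpy : p.2 ∉ range (meshY N ly)) :
    ∃ X0 X1 Y0 Y1, IsBilinearInterpolantOn g gI X0 X1 Y0 Y1 ∧
      Icc X0 X1 ×ˢ Icc Y0 Y1 ⊆ OmegaS lx ly ∧
      (N : ℝ)⁻¹ ≤ X1 - X0 ∧ X1 - X0 ≤ 3 * (N : ℝ)⁻¹ ∧
      (N : ℝ)⁻¹ ≤ Y1 - Y0 ∧ Y1 - Y0 ≤ 3 * (N : ℝ)⁻¹ ∧ p ∈ Ioo X0 X1 ×ˢ Ioo Y0 Y1 := by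
  obtain ⟨i, hi, hpi, hRx, hwx, hwx'⟩ := h.exists_meshX_cell hp.1 hpx
  obtain ⟨j, hj, hpj, hRy, hwy, hwy'⟩ := h.exists_meshY_cell hp.2 hpy
  exact ⟨_, _, _, _, hI.isBilinearInterpolantOn hi hj, prod_mono hRx hRy, hwx, hwx', hwy, hwy',
    hpi, hpj⟩

lemma integral_omegaS_le (h : ShishkinHyp N ε β lx ly) {A a b : ℝ} (hA : 0 ≤ A) (ha : 0 ≤ a)
    (hb : 0 ≤ b) :
    ∫ p in OmegaS lx ly, (A * (N : ℝ)⁻¹ + a * ε⁻¹ * layerX β ε p.1 + b * (√ε)⁻¹ * layerY ε p.2)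
      ≤ (A + a / β + 2 * b) * (N : ℝ)⁻¹ := by
  set n := (N : ℝ)⁻¹
  have hn : 0 < n := h.inv_N_pos
  have hnn : n ^ 2 ≤ n := pow_le_of_le_one hn.le (inv_le_one_of_one_le₀ h.one_le_N) two_ne_zero
  have hlx := h.lx_nonneg
  have hly := h.ly_nonneg
  have hε := h.eps_pos
  have hβ := h.beta_pos
  obtain ⟨-, -, -, -, -, -, -, hlx2, hly4⟩ := id h
  have hfc : Continuous fun x => A * n + a * ε⁻¹ * layerX β ε x := by
    have := continuous_layerX β ε; fun_prop
  have hgc : Continuous fun y => b * (√ε)⁻¹ * layerY ε y := by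
    have := continuous_layerY ε; fun_prop
  have hF : ∀ x, HasDerivAt (fun x => A * n * x + a * (β⁻¹ * layerX β ε x))
      (A * n + a * ε⁻¹ * layerX β ε x) x := fun x =>
    (((hasDerivAt_id x).const_mul (A * n)).add
      ((hasDerivAt_layerX ε hβ.ne' x).const_mul a)).congr_deriv (by simp; ring)
  have hG : ∀ y, HasDerivAt (fun y => b * (exp (-(1 - y) / √ε) - exp (-y / √ε)))
      (b * (√ε)⁻¹ * layerY ε y) y := fun y =>
    ((hasDerivAt_layerY ε y).const_mul b).congr_deriv (by ring)
  have hI1 : ∫ x in (0 : ℝ)..(1 - lx), (A * n + a * ε⁻¹ * layerX β ε x) ≤ (A + a / β) * n := by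
    rw [intervalIntegral.integral_eq_sub_of_hasDerivAt (fun x _ => hF x)
      (hfc.intervalIntegrable _ _)]
    have h1 := h.layerX_le le_rfl
    have h0 := layerX_pos β ε 0
    have hβa : 0 ≤ a * β⁻¹ := mul_nonneg ha (inv_nonneg.2 hβ.le)
    rw [div_eq_mul_inv]
    nlinarith [mul_le_mul_of_nonneg_left h1 hβa, mul_nonneg hβa h0.le, mul_nonneg hA hn.le]
  have hI2 : ∫ y in ly..(1 - ly), b * (√ε)⁻¹ * layerY ε y ≤ 2 * b * n := by
    rw [intervalIntegral.integral_eq_sub_of_hasDerivAt (fun y _ => hG y)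
      (hgc.intervalIntegrable _ _)]
    have h0 := h.exp_le le_rfl
    have h1 := h.exp_le (y := 1 - (1 - ly)) (by linarith)
    have := exp_pos (-(1 - ly) / √ε)
    nlinarith
  have hI1' : 0 ≤ ∫ x in (0 : ℝ)..(1 - lx), (A * n + a * ε⁻¹ * layerX β ε x) :=
    intervalIntegral.integral_nonneg (by linarith) fun x _ =>
      add_nonneg (mul_nonneg hA hn.le) (mul_nonneg (mul_nonneg ha (inv_nonneg.2 hε.le))
        (layerX_pos β ε x).le)
  have hI2' : 0 ≤ ∫ y in ly..(1 - ly), b * (√ε)⁻¹ * layerY ε y :=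
    intervalIntegral.integral_nonneg (by linarith) fun y _ =>
      mul_nonneg (mul_nonneg hb (inv_nonneg.2 (sqrt_nonneg ε))) (layerY_pos ε y).le
  rw [show OmegaS lx ly = Icc 0 (1 - lx) ×ˢ Icc ly (1 - ly) from rfl,
    setIntegral_Icc_prod_Icc_add (by linarith) (by linarith) hfc hgc]
  nlinarith

end ShishkinHyp

section Pointwise

variable {N : ℕ} {ε β lx ly C0 : ℝ} {S E1 E2 E12 u uI : ℝ × ℝ → ℝ} {X0 X1 Y0 Y1 : ℝ}
  {p : ℝ × ℝ}

lemma abs_pdx_sub_interpolant_le (hSh : ShishkinHyp N ε β lx ly) (hC0 : 0 ≤ C0)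
    (hS : BoundS C0 S) (hE1 : BoundE1 ε β C0 E1) (hE2 : BoundE2 ε C0 E2)
    (hE12 : BoundE12 ε β C0 E12) (hu : ∀ q, u q = S q + E1 q + E2 q + E12 q)
    (hI : IsBilinearInterpolantOn u uI X0 X1 Y0 Y1) (hR : Icc X0 X1 ×ˢ Icc Y0 Y1 ⊆ OmegaS lx ly)
    (hwx : (N : ℝ)⁻¹ ≤ X1 - X0) (hwx' : X1 - X0 ≤ 3 * (N : ℝ)⁻¹)
    (hwy' : Y1 - Y0 ≤ 3 * (N : ℝ)⁻¹) (hp : p ∈ Ioo X0 X1 ×ˢ Ioo Y0 Y1) :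
    |pdx (fun q => u q - uI q) p|
      ≤ (10 + 3 / β) * C0 * (N : ℝ)⁻¹ + 3 * C0 * ε⁻¹ * layerX β ε p.1 := by
  set h := (N : ℝ)⁻¹
  have hh : h ^ 2 ≤ h := pow_le_of_le_one hSh.inv_N_pos.le (inv_le_one_of_one_le₀ hSh.one_le_N)
    two_ne_zero
  have hX : X0 < X1 := by linarith [hSh.inv_N_pos]
  have hpR : p ∈ Icc X0 X1 ×ˢ Icc Y0 Y1 := ⟨Ioo_subset_Icc_self hp.1, Ioo_subset_Icc_self hp.2⟩
  have hRU : Icc X0 X1 ×ˢ Icc Y0 Y1 ⊆ UnitSq := hR.trans hSh.omegaS_subset_unitSq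
  have hSd : Differentiable ℝ S := hS.1.differentiable (by norm_num)
  have hE1d : Differentiable ℝ E1 := hE1.1.differentiable (by norm_num)
  have hE2d : Differentiable ℝ E2 := hE2.1.differentiable (by norm_num)
  have hE12d : Differentiable ℝ E12 := hE12.1.differentiable (by norm_num)
  have hud : Differentiable ℝ u := by rw [show u = _ from funext hu]; fun_prop
  refine hI.abs_pdx_sub_le hp (hud p) fun Y hY => ?_
  have hYc : Y ∈ Icc Y0 Y1 := mem_Icc_of_mem_pair (hp.2.1.trans hp.2.2) hY
  have bS : |pdx S p - slope (fun t => S (t, Y)) X0 X1| ≤ 6 * C0 * h :=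
    (abs_pdx_sub_slope_le_of_abs_pd2_le (hS.1.of_le (by norm_num))
      (fun q hq => hS.abs_pdx_pdx_le (hRU hq)) (fun q hq => hS.abs_pdy_pdx_le (hRU hq))
      hX hpR hYc).trans (by nlinarith)
  have bE1 := hSh.abs_pdx_sub_slope_le_of_layerX hC0 hE1d hR
    (fun q hq => hE1.abs_pdx_le (hRU hq)) hwx hpR hYc
  have bE2 : |pdx E2 p - slope (fun t => E2 (t, Y)) X0 X1| ≤ 4 * C0 * h :=
    (abs_pdx_sub_slope_le_two_mul hE2d (δ := C0 * (2 * h ^ 2))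
      (fun q hq => (hE2.abs_pdx_le (hRU hq)).trans
        (mul_le_mul_of_nonneg_left (hSh.layerY_le (hR hq).2) hC0)) hX hpR hYc).trans
      (by nlinarith)
  have bE12 := hSh.abs_pdx_sub_slope_le_of_layerX (c := 2 * C0) (by positivity) hE12d hR
    (fun q hq => (hE12.abs_pdx_le (hRU hq)).trans <| by
      have := layerY_le_two (ε := ε) (hRU hq).2
      have : 0 ≤ C0 * ε⁻¹ * layerX β ε q.1 :=
        mul_nonneg (mul_nonneg hC0 (inv_nonneg.2 hSh.eps_pos.le)) (layerX_pos _ _ _).le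
      nlinarith) hwx hpR hYc
  rw [pdx_sub_slope_eq_add hu hSd hE1d hE2d hE12d]
  calc _ ≤ _ := abs_add_add_add_le _ _ _ _
    _ ≤ 6 * C0 * h + (C0 * ε⁻¹ * layerX β ε p.1 + C0 / β * h) + 4 * C0 * h
        + (2 * C0 * ε⁻¹ * layerX β ε p.1 + 2 * C0 / β * h) := by gcongr
    _ = _ := by ring

lemma abs_pdy_sub_interpolant_le (hSh : ShishkinHyp N ε β lx ly) (hC0 : 0 ≤ C0)
    (hS : BoundS C0 S) (hE1 : BoundE1 ε β C0 E1) (hE2 : BoundE2 ε C0 E2)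
    (hE12 : BoundE12 ε β C0 E12) (hu : ∀ q, u q = S q + E1 q + E2 q + E12 q)
    (hI : IsBilinearInterpolantOn u uI X0 X1 Y0 Y1) (hR : Icc X0 X1 ×ˢ Icc Y0 Y1 ⊆ OmegaS lx ly)
    (hwy : (N : ℝ)⁻¹ ≤ Y1 - Y0) (hwx' : X1 - X0 ≤ 3 * (N : ℝ)⁻¹)
    (hwy' : Y1 - Y0 ≤ 3 * (N : ℝ)⁻¹) (hp : p ∈ Ioo X0 X1 ×ˢ Ioo Y0 Y1) :
    |pdy (fun q => u q - uI q) p| ≤ 12 * C0 * (N : ℝ)⁻¹ + 2 * C0 * (√ε)⁻¹ * layerY ε p.2 := by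
  set h := (N : ℝ)⁻¹
  have hh : h ^ 2 ≤ h := pow_le_of_le_one hSh.inv_N_pos.le (inv_le_one_of_one_le₀ hSh.one_le_N)
    two_ne_zero
  have hY : Y0 < Y1 := by linarith [hSh.inv_N_pos]
  have hpR : p ∈ Icc X0 X1 ×ˢ Icc Y0 Y1 := ⟨Ioo_subset_Icc_self hp.1, Ioo_subset_Icc_self hp.2⟩
  have hRU : Icc X0 X1 ×ˢ Icc Y0 Y1 ⊆ UnitSq := hR.trans hSh.omegaS_subset_unitSq
  have hSd : Differentiable ℝ S := hS.1.differentiable (by norm_num)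
  have hE1d : Differentiable ℝ E1 := hE1.1.differentiable (by norm_num)
  have hE2d : Differentiable ℝ E2 := hE2.1.differentiable (by norm_num)
  have hE12d : Differentiable ℝ E12 := hE12.1.differentiable (by norm_num)
  have hud : Differentiable ℝ u := by rw [show u = _ from funext hu]; fun_prop
  refine hI.abs_pdy_sub_le hp (hud p) fun X hX => ?_
  have hXc : X ∈ Icc X0 X1 := mem_Icc_of_mem_pair (hp.1.1.trans hp.1.2) hX
  have bS : |pdy S p - slope (fun t => S (X, t)) Y0 Y1| ≤ 6 * C0 * h :=
    (abs_pdy_sub_slope_le_of_abs_pd2_le (hS.1.of_le (by norm_num))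
      (fun q hq => hS.abs_pdx_pdy_le (hRU hq)) (fun q hq => hS.abs_pdy_pdy_le (hRU hq))
      hY hpR hXc).trans (by nlinarith)
  have bE1 : |pdy E1 p - slope (fun t => E1 (X, t)) Y0 Y1| ≤ 2 * C0 * h :=
    (abs_pdy_sub_slope_le_two_mul hE1d (δ := C0 * h ^ 2)
      (fun q hq => (hE1.abs_pdy_le (hRU hq)).trans
        (mul_le_mul_of_nonneg_left (hSh.layerX_le (hR hq).1.2) hC0)) hY hpR hXc).trans
      (by nlinarith)
  have bE2 := hSh.abs_pdy_sub_slope_le_of_layerY hC0 hE2d hR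
    (fun q hq => hE2.abs_pdy_le hSh.eps_pos.le (hRU hq)) hwy hpR hXc
  have bE12 := hSh.abs_pdy_sub_slope_le_of_layerY hC0 hE12d hR
    (fun q hq => (hE12.abs_pdy_le hSh.eps_pos.le (hRU hq)).trans <| by
      have := layerX_le_one hSh.beta_pos.le hSh.eps_pos.le (hRU hq).1.2
      have : 0 ≤ C0 * (√ε)⁻¹ * layerY ε q.2 :=
        mul_nonneg (mul_nonneg hC0 (inv_nonneg.2 (sqrt_nonneg ε))) (layerY_pos _ _).le
      nlinarith) hwy hpR hXc
  rw [pdy_sub_slope_eq_add hu hSd hE1d hE2d hE12d]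
  calc _ ≤ _ := abs_add_add_add_le _ _ _ _
    _ ≤ 6 * C0 * h + 2 * C0 * h + (C0 * (√ε)⁻¹ * layerY ε p.2 + 2 * C0 * h)
        + (C0 * (√ε)⁻¹ * layerY ε p.2 + 2 * C0 * h) := by gcongr
    _ = _ := by ring

lemma ae_abs_pdx_add_abs_pdy_sub_interpolant_le (hSh : ShishkinHyp N ε β lx ly) (hC0 : 0 ≤ C0)
    (hS : BoundS C0 S) (hE1 : BoundE1 ε β C0 E1) (hE2 : BoundE2 ε C0 E2)
    (hE12 : BoundE12 ε β C0 E12) (hu : ∀ q, u q = S q + E1 q + E2 q + E12 q)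
    (hI : IsMeshInterpolant N lx ly u uI) :
    ∀ᵐ p ∂volume.restrict (OmegaS lx ly),
      |pdx (fun q => u q - uI q) p| + |pdy (fun q => u q - uI q) p|
        ≤ (22 + 3 / β) * C0 * (N : ℝ)⁻¹ + 3 * C0 * ε⁻¹ * layerX β ε p.1
          + 2 * C0 * (√ε)⁻¹ * layerY ε p.2 := by
  filter_upwards [ae_restrict_mem (measurableSet_Icc.prod measurableSet_Icc),
    ae_restrict_of_ae (ae_fst_notMem_and_snd_notMem (countable_range (meshX N lx))
      (countable_range (meshY N ly)))] with p hp ⟨hpx, hpy⟩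
  obtain ⟨X0, X1, Y0, Y1, hIc, hR, hwx, hwx', hwy, hwy', hpc⟩ :=
    hSh.exists_interpolant_cell hI hp hpx hpy
  have hx := abs_pdx_sub_interpolant_le hSh hC0 hS hE1 hE2 hE12 hu hIc hR hwx hwx' hwy' hpc
  have hy := abs_pdy_sub_interpolant_le hSh hC0 hS hE1 hE2 hE12 hu hIc hR hwy hwx' hwy' hpc
  calc _ ≤ _ := add_le_add hx hy
    _ = _ := by ring

end Pointwise

/-- `‖∇(u − u^I)‖_{L^1(Ω_s)} ≤ C N⁻¹`, with the gradient of the piecewise bilinear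
interpolant taken rectangle-by-rectangle. -/
theorem grad_interpolation_L1_OmegaS (β C0 : ℝ) (hβ : 0 < β) (hC0 : 0 < C0) :
    ∃ C : ℝ, 0 < C ∧
      ∀ (N : ℕ) (ε lx ly : ℝ) (S E1 E2 E12 u uI : ℝ × ℝ → ℝ),
        ShishkinHyp N ε β lx ly →
        BoundS C0 S → BoundE1 ε β C0 E1 → BoundE2 ε C0 E2 → BoundE12 ε β C0 E12 →
        (∀ p : ℝ × ℝ, u p = S p + E1 p + E2 p + E12 p) →
        IsMeshInterpolant N lx ly u uI →
        ∫ p in OmegaS lx ly,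
            (|pdx (fun q => u q - uI q) p| + |pdy (fun q => u q - uI q) p|)
          ≤ C * (N : ℝ)⁻¹ := by
  refine ⟨(26 + 6 / β) * C0, by positivity, ?_⟩
  intro N ε lx ly S E1 E2 E12 u uI hSh hS hE1 hE2 hE12 hu hI
  have hmaj : Continuous fun p : ℝ × ℝ => (22 + 3 / β) * C0 * (N : ℝ)⁻¹
      + 3 * C0 * ε⁻¹ * layerX β ε p.1 + 2 * C0 * (√ε)⁻¹ * layerY ε p.2 := by
    have := continuous_layerX β ε; have := continuous_layerY ε; fun_prop
  calc _ ≤ ∫ p in OmegaS lx ly, ((22 + 3 / β) * C0 * (N : ℝ)⁻¹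
          + 3 * C0 * ε⁻¹ * layerX β ε p.1 + 2 * C0 * (√ε)⁻¹ * layerY ε p.2) :=
        integral_mono_of_nonneg (ae_of_all _ fun p => by positivity)
          (hmaj.continuousOn.integrableOn_compact (isCompact_Icc.prod isCompact_Icc))
          (ae_abs_pdx_add_abs_pdy_sub_interpolant_le hSh hC0.le hS hE1 hE2 hE12 hu hI)
    _ ≤ ((22 + 3 / β) * C0 + 3 * C0 / β + 2 * (2 * C0)) * (N : ℝ)⁻¹ :=
        hSh.integral_omegaS_le (by positivity) (by positivity) (by positivity)
    _ = (26 + 6 / β) * C0 * (N : ℝ)⁻¹ := by ring
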